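/- arXiv:math/0303199 — 2 statements merged into one kernel-verified Lean document; each statement's English description precedes it below -/
import Mathlib

section
/- Let r > 0 and 0 < α < 1. Let (z_n) be a sequence in the open unit disk 𝔻 ⊂ ℂ with z_n → 1, and for each n let h_n : D(0,r) → 𝔻 be a holomorphic function with h_n(0) = 0. Define g_n(z) = (h_n(z) + z_n)/(1 + conj(z_n)·h_n(z)). Then g_n converges to the constant function 1 uniformly on the disk D(0, αr). -/
/-!
By the Schwarz lemma `|h_n(w)| ≤ |w|/r`, so every `h_n` maps `D(0, αr)` into `D(0, α)`.
On `|u| ≤ α` the Möbius map `u ↦ (u + a)/(1 + ā u)` is within `|1 - a| (1 + α)/(1 - |a| α)` of `1`,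
a bound that tends to `0` as `a → 1`; composing with the `h_n` keeps this uniform bound.
-/

open Filter Metric Set
open scoped Topology ComplexConjugate

theorem tendstoUniformlyOn_of_dist_le {ι α β : Type*} [PseudoMetricSpace β] {l : Filter ι}
    {F : ι → α → β} {f : α → β} {s : Set α} {b : ι → ℝ} (hb : Tendsto b l (𝓝 0))
    (hF : ∀ᶠ n in l, ∀ x ∈ s, dist (f x) (F n x) ≤ b n) : TendstoUniformlyOn F f l s := by
  rw [Metric.tendstoUniformlyOn_iff]
  intro ε hε
  filter_upwards [hF, hb.eventually (gt_mem_nhds hε)] with n hFn hbn x hx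
  exact (hFn x hx).trans_lt hbn

theorem TendstoUniformlyOn.comp_mapsTo_of_const {ι α γ β : Type*} [UniformSpace β]
    {l : Filter ι} {F : ι → α → β} {c : β} {s : Set α} {g : ι → γ → α} {t : Set γ}
    (hF : TendstoUniformlyOn F (fun _ => c) l s) (hg : ∀ n, MapsTo (g n) t s) :
    TendstoUniformlyOn (fun n x => F n (g n x)) (fun _ => c) l t := fun u hu =>
  (hF u hu).mono fun n hn x hx => hn (g n x) (hg n hx)

theorem Complex.mapsTo_ball_mul_of_mapsTo_ball {E F : Type*} [NormedAddCommGroup E]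
    [NormedSpace ℂ E] [NormedAddCommGroup F] [NormedSpace ℂ F] {f : E → F} {R α : ℝ}
    (hd : DifferentiableOn ℂ f (ball 0 R)) (h_maps : MapsTo f (ball 0 R) (ball 0 1))
    (h₀ : f 0 = 0) (hα₀ : 0 < α) (hα₁ : α ≤ 1) : MapsTo f (ball 0 (α * R)) (ball 0 α) := by
  intro w hw
  have hR : 0 < R := pos_of_mul_pos_right (nonempty_ball.1 ⟨w, hw⟩) hα₀.le
  have hwR : w ∈ ball 0 R := ball_subset_ball (by nlinarith) hw
  have schwarz := dist_le_div_mul_dist_of_mapsTo_ball hd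
    (by rw [h₀]; exact h_maps.mono_right ball_subset_closedBall) hwR
  rw [mem_ball_zero_iff] at hw ⊢
  rw [h₀, dist_zero_right, dist_zero_right] at schwarz
  calc ‖f w‖ ≤ 1 / R * ‖w‖ := schwarz
    _ < 1 / R * (α * R) := by gcongr
    _ = α := by field_simp

theorem Complex.norm_moebius_sub_one_le {a u : ℂ} {ρ : ℝ} (hu : ‖u‖ ≤ ρ) (hρ : ‖a‖ * ρ < 1) :
    ‖1 - (u + a) / (1 + conj a * u)‖ ≤ ‖1 - a‖ * (1 + ρ) / (1 - ‖a‖ * ρ) := by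
  have hden : 1 - ‖a‖ * ρ ≤ ‖1 + conj a * u‖ := by
    have : ‖conj a * u‖ ≤ ‖a‖ * ρ := by
      rw [norm_mul, Complex.norm_conj]; gcongr
    have := norm_sub_norm_le (1 : ℂ) (-(conj a * u))
    rw [sub_neg_eq_add, norm_neg, norm_one] at this
    linarith
  have hden0 : 1 + conj a * u ≠ 0 := norm_pos_iff.1 (by linarith)
  have hnum : ‖(1 - a) - (1 - conj a) * u‖ ≤ ‖1 - a‖ * (1 + ρ) := by
    have h1 : ‖1 - conj a‖ = ‖1 - a‖ := by
      rw [← Complex.norm_conj, map_sub, map_one, Complex.conj_conj]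
    calc ‖(1 - a) - (1 - conj a) * u‖ ≤ ‖1 - a‖ + ‖1 - conj a‖ * ‖u‖ :=
          (norm_sub_le _ _).trans_eq (by rw [norm_mul])
      _ ≤ ‖1 - a‖ * (1 + ρ) := by rw [h1]; nlinarith [norm_nonneg (1 - a)]
  calc ‖1 - (u + a) / (1 + conj a * u)‖
      = ‖(1 - a) - (1 - conj a) * u‖ / ‖1 + conj a * u‖ := by
        rw [one_sub_div hden0, norm_div]; congr 2; ring
    _ ≤ ‖1 - a‖ * (1 + ρ) / (1 - ‖a‖ * ρ) :=
        div_le_div₀ ((norm_nonneg _).trans hnum) hnum (by linarith) hden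

theorem Complex.tendstoUniformlyOn_moebius_one {ι : Type*} {l : Filter ι} {a : ι → ℂ}
    (ha : Tendsto a l (𝓝 1)) {ρ : ℝ} (hρ : ρ < 1) :
    TendstoUniformlyOn (fun n u => (u + a n) / (1 + conj (a n) * u)) (fun _ => 1) l
      (closedBall 0 ρ) := by
  have hnorm : Tendsto (fun n => ‖a n‖ * ρ) l (𝓝 ρ) := by
    simpa using ha.norm.mul_const ρ
  have hbound : Tendsto (fun n => ‖1 - a n‖ * (1 + ρ) / (1 - ‖a n‖ * ρ)) l (𝓝 0) := by
    have := (((tendsto_const_nhds (x := (1 : ℂ))).sub ha).norm.mul_const (1 + ρ)).div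
      ((tendsto_const_nhds (x := (1 : ℝ))).sub hnorm) (sub_ne_zero.2 hρ.ne')
    simpa [Pi.div_def] using this
  refine tendstoUniformlyOn_of_dist_le hbound ?_
  filter_upwards [hnorm.eventually (gt_mem_nhds hρ)] with n hn u hu
  rw [dist_eq_norm]
  exact norm_moebius_sub_one_le (mem_closedBall_zero_iff.1 hu) hn

theorem moebius_uniform_convergence_general
    (r α : ℝ) (hα : α ∈ Set.Ioo (0:ℝ) 1)
    (z : ℕ → ℂ)
    (hz1 : Tendsto z atTop (nhds 1))
    (h : ℕ → ℂ → ℂ)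
    (hhol : ∀ n, DifferentiableOn ℂ (h n) (ball 0 r))
    (hmap : ∀ n, ∀ w ∈ ball (0:ℂ) r, h n w ∈ ball (0:ℂ) 1)
    (h0 : ∀ n, h n 0 = 0) :
    TendstoUniformlyOn
      (fun n w => (h n w + z n) / (1 + (starRingEnd ℂ) (z n) * h n w))
      (fun _ => 1) atTop (ball 0 (α * r)) :=
  (Complex.tendstoUniformlyOn_moebius_one hz1 hα.2).comp_mapsTo_of_const fun n =>
    (Complex.mapsTo_ball_mul_of_mapsTo_ball (hhol n) (hmap n) (h0 n) hα.1 hα.2.le).mono_right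
      ball_subset_closedBall

/-- If `z_n → 1` in the open unit disk and `h_n : D(0,r) → 𝔻` are holomorphic with
`h_n(0) = 0`, then the Möbius compositions `g_n = (h_n + z_n)/(1 + conj(z_n)·h_n)`
converge uniformly to the constant `1` on `D(0, αr)`, for every `0 < α < 1`. -/
theorem moebius_uniform_convergence
    (r α : ℝ) (hr : 0 < r) (hα : α ∈ Set.Ioo (0:ℝ) 1)
    (z : ℕ → ℂ) (hz : ∀ n, z n ∈ ball (0:ℂ) 1)
    (hz1 : Tendsto z atTop (nhds 1))
    (h : ℕ → ℂ → ℂ)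
    (hhol : ∀ n, DifferentiableOn ℂ (h n) (ball 0 r))
    (hmap : ∀ n, ∀ w ∈ ball (0:ℂ) r, h n w ∈ ball (0:ℂ) 1)
    (h0 : ∀ n, h n 0 = 0) :
    TendstoUniformlyOn
      (fun n w => (h n w + z n) / (1 + (starRingEnd ℂ) (z n) * h n w))
      (fun _ => 1) atTop (ball 0 (α * r)) :=
  moebius_uniform_convergence_general r α hα z hz1 h hhol hmap h0
end

section
/- Let h be a harmonic function on the open unit disk D ⊂ ℝ² ≅ ℂ satisfying h(conj(z)) = −h(z) for all z ∈ D (so h vanishes on the real diameter D⁰ = D ∩ ℝ), and suppose h ≥ 0 on the lower half-disk D⁻ = {z ∈ D : Im z < 0}. If the gradient of h vanishes at some point z₀ ∈ D⁰, then h is identically zero on D. Equivalently, if h is not identically zero, then ∇h(z₀) ≠ 0 for every z₀ on the real diameter. -/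
open Real Filter Set Topology MeasureTheory

/-- Partial derivative in the first (x) variable. -/
noncomputable def pd1 (u : ℝ × ℝ → ℝ) (z : ℝ × ℝ) : ℝ := deriv (fun t => u (t, z.2)) z.1

/-- Partial derivative in the second (y) variable. -/
noncomputable def pd2 (u : ℝ × ℝ → ℝ) (z : ℝ × ℝ) : ℝ := deriv (fun t => u (z.1, t)) z.2

/-- `W = √(1 + p² + q²)` for the function `u`. -/
noncomputable def Wg (u : ℝ × ℝ → ℝ) (z : ℝ × ℝ) : ℝ :=
  Real.sqrt (1 + pd1 u z ^ 2 + pd2 u z ^ 2)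

/-- `u` is a C² solution of the minimal surfaces equation
`(1+q²)r − 2pq·s + (1+p²)t = 0` on `Ω`. -/
def IsMSE (u : ℝ × ℝ → ℝ) (Ω : Set (ℝ × ℝ)) : Prop :=
  ContDiffOn ℝ 2 u Ω ∧ ∀ z ∈ Ω,
    (1 + pd2 u z ^ 2) * pd1 (pd1 u) z
      - 2 * pd1 u z * pd2 u z * pd2 (pd1 u) z
      + (1 + pd1 u z ^ 2) * pd2 (pd2 u) z = 0

/-- Euclidean length of a planar vector. -/
noncomputable def len (v : ℝ × ℝ) : ℝ := Real.sqrt (v.1 ^ 2 + v.2 ^ 2)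

/-- Euclidean open disk in the plane. -/
def eball (P : ℝ × ℝ) (ρ : ℝ) : Set (ℝ × ℝ) := {z | len (z - P) < ρ}

/-!
On the disk, `h` is the real part of a holomorphic `F`. If `F` is not constant near the point
`z₀` of the real diameter, then `F z - F z₀ = (z - z₀) ^ n * G z` with `G z₀ ≠ 0`, and `n ≥ 2`
because `∇h (z₀) = 0`. Along the ray `z₀ + r e^{iθ}` this gives
`h ≈ h z₀ + r ^ n Re (e^{inθ} G z₀)`; as `θ` runs over `(-π, 0)`, `nθ` sweeps an interval of
length `nπ ≥ 2π`, so some ray into the lower half-disk makes `h < h z₀ = 0` (oddness gives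
`h z₀ = 0`), contradicting `h ≥ 0` there. Hence `F` is locally constant, so constant on the
disk by the identity theorem, and `h ≡ h z₀ = 0`.
-/

open Complex InnerProductSpace Laplacian Metric

section ComplexSlices

theorem hasDerivAt_complex_mk_left (x y : ℝ) : HasDerivAt (fun t : ℝ => (⟨t, y⟩ : ℂ)) 1 x := by
  simpa using ((hasDerivAt_id x).ofReal_comp).add_const (y * I : ℂ) |>.congr_of_eventuallyEq
    (.of_forall fun t => by simp [Complex.ext_iff])

theorem hasDerivAt_complex_mk_right (x y : ℝ) : HasDerivAt (fun t : ℝ => (⟨x, t⟩ : ℂ)) I y := by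
  simpa using (((hasDerivAt_id y).ofReal_comp).mul_const I).const_add (x : ℂ)
    |>.congr_of_eventuallyEq (.of_forall fun t => by simp [Complex.ext_iff])

variable {E : Type*} [NormedAddCommGroup E] [NormedSpace ℝ E] {u : ℂ → E} {x y : ℝ}

theorem DifferentiableAt.hasDerivAt_complex_mk_left (hu : DifferentiableAt ℝ u ⟨x, y⟩) :
    HasDerivAt (fun t : ℝ => u ⟨t, y⟩) (fderiv ℝ u ⟨x, y⟩ 1) x :=
  hu.hasFDerivAt.comp_hasDerivAt x (_root_.hasDerivAt_complex_mk_left x y)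

theorem DifferentiableAt.hasDerivAt_complex_mk_right (hu : DifferentiableAt ℝ u ⟨x, y⟩) :
    HasDerivAt (fun t : ℝ => u ⟨x, t⟩) (fderiv ℝ u ⟨x, y⟩ I) y :=
  hu.hasFDerivAt.comp_hasDerivAt y (_root_.hasDerivAt_complex_mk_right x y)

end ComplexSlices

section Partials

variable {u : ℂ → ℝ} {z : ℝ × ℝ}

theorem pd1_eq_fderiv (hu : DifferentiableAt ℝ u ⟨z.1, z.2⟩) :
    pd1 (fun p => u ⟨p.1, p.2⟩) z = fderiv ℝ u ⟨z.1, z.2⟩ 1 :=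
  hu.hasDerivAt_complex_mk_left.deriv

theorem pd2_eq_fderiv (hu : DifferentiableAt ℝ u ⟨z.1, z.2⟩) :
    pd2 (fun p => u ⟨p.1, p.2⟩) z = fderiv ℝ u ⟨z.1, z.2⟩ I :=
  hu.hasDerivAt_complex_mk_right.deriv

theorem pd1_pd1_eq_fderiv_fderiv (hu : ContDiffAt ℝ 2 u ⟨z.1, z.2⟩) :
    pd1 (pd1 fun p => u ⟨p.1, p.2⟩) z = fderiv ℝ (fderiv ℝ u) ⟨z.1, z.2⟩ 1 1 := by
  have hdiff : ∀ᶠ t in 𝓝 z.1, DifferentiableAt ℝ u ⟨t, z.2⟩ :=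
    (hasDerivAt_complex_mk_left z.1 z.2).continuousAt.eventually
      (hu.eventually (by simp)) |>.mono fun _ ht => ht.differentiableAt two_ne_zero
  have hu' : DifferentiableAt ℝ (fderiv ℝ u) ⟨z.1, z.2⟩ :=
    (hu.fderiv_right (m := 1) le_rfl).differentiableAt one_ne_zero
  have := (hu'.clm_apply (differentiableAt_const 1)).hasDerivAt_complex_mk_left
  rw [fderiv_clm_apply hu' (differentiableAt_const 1)] at this
  refine HasDerivAt.deriv ?_
  simpa using this.congr_of_eventuallyEq (hdiff.mono fun t ht => pd1_eq_fderiv (z := (t, z.2)) ht)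

theorem pd2_pd2_eq_fderiv_fderiv (hu : ContDiffAt ℝ 2 u ⟨z.1, z.2⟩) :
    pd2 (pd2 fun p => u ⟨p.1, p.2⟩) z = fderiv ℝ (fderiv ℝ u) ⟨z.1, z.2⟩ I I := by
  have hdiff : ∀ᶠ t in 𝓝 z.2, DifferentiableAt ℝ u ⟨z.1, t⟩ :=
    (hasDerivAt_complex_mk_right z.1 z.2).continuousAt.eventually
      (hu.eventually (by simp)) |>.mono fun _ ht => ht.differentiableAt two_ne_zero
  have hu' : DifferentiableAt ℝ (fderiv ℝ u) ⟨z.1, z.2⟩ :=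
    (hu.fderiv_right (m := 1) le_rfl).differentiableAt one_ne_zero
  have := (hu'.clm_apply (differentiableAt_const I)).hasDerivAt_complex_mk_right
  rw [fderiv_clm_apply hu' (differentiableAt_const I)] at this
  refine HasDerivAt.deriv ?_
  simpa using this.congr_of_eventuallyEq (hdiff.mono fun t ht => pd2_eq_fderiv (z := (z.1, t)) ht)

theorem laplacian_eq_pd1_pd1_add_pd2_pd2 {w : ℂ} (hu : ContDiffAt ℝ 2 u w) :
    Δ u w = pd1 (pd1 fun p => u ⟨p.1, p.2⟩) (w.re, w.im)
      + pd2 (pd2 fun p => u ⟨p.1, p.2⟩) (w.re, w.im) := by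
  rw [pd1_pd1_eq_fderiv_fderiv hu, pd2_pd2_eq_fderiv_fderiv hu,
    laplacian_eq_iteratedFDeriv_complexPlane]
  simp [iteratedFDeriv_two_apply]

theorem fderiv_eq_zero_iff_pd1_eq_zero_and_pd2_eq_zero {u : ℂ → ℝ} {z : ℝ × ℝ}
    (hu : DifferentiableAt ℝ u ⟨z.1, z.2⟩) :
    fderiv ℝ u ⟨z.1, z.2⟩ = 0 ↔
      pd1 (fun p => u ⟨p.1, p.2⟩) z = 0 ∧ pd2 (fun p => u ⟨p.1, p.2⟩) z = 0 := by
  rw [pd1_eq_fderiv hu, pd2_eq_fderiv hu]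
  refine ⟨fun h => by simp [h], fun ⟨h1, hI⟩ => ?_⟩
  refine ContinuousLinearMap.coe_injective (Complex.basisOneI.ext fun i => ?_)
  fin_cases i <;> simpa

end Partials

theorem harmonicOnNhd_of_pd1_pd1_add_pd2_pd2_eq_zero {h : ℝ × ℝ → ℝ} {U : Set (ℝ × ℝ)}
    (hU : IsOpen U) (hC2 : ContDiffOn ℝ 2 h U)
    (hharm : ∀ z ∈ U, pd1 (pd1 h) z + pd2 (pd2 h) z = 0) :
    HarmonicOnNhd (fun w : ℂ => h (w.re, w.im)) (equivRealProd ⁻¹' U) := by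
  have hC2' : ∀ w ∈ equivRealProd ⁻¹' U, ContDiffAt ℝ 2 (fun w : ℂ => h (w.re, w.im)) w :=
    fun w hw => (hC2.contDiffAt (hU.mem_nhds hw)).comp w equivRealProdCLM.contDiff.contDiffAt
  intro w hw
  refine ⟨hC2' w hw, ?_⟩
  filter_upwards [(hU.preimage equivRealProdCLM.continuous).mem_nhds hw] with w' hw'
  rw [laplacian_eq_pd1_pd1_add_pd2_pd2 (hC2' w' hw')]
  exact hharm _ hw'

theorem exists_neg_re_exp_pow_mul {n : ℕ} (hn : 2 ≤ n) {a : ℂ} (ha : a ≠ 0) :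
    ∃ θ ∈ Ioo (-π) 0, (exp (θ * I) ^ n * a).re < 0 := by
  -- `n θ + arg a = arg a / 4 - π`, so the product points into the open left half-plane.
  have hn' : (2 : ℝ) ≤ n := by exact_mod_cast hn
  have hα := neg_pi_lt_arg a
  have hα' := arg_le_pi a
  refine ⟨(-π - 3 * arg a / 4) / n, ⟨?_, ?_⟩, ?_⟩
  · rw [lt_div_iff₀ (by linarith)]; nlinarith [pi_pos]
  · exact div_neg_of_neg_of_pos (by linarith) (by linarith)
  · have hprod : exp (((-π - 3 * arg a / 4) / n : ℝ) * I) ^ n * a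
        = ‖a‖ * exp ((arg a / 4 - π : ℝ) * I) := by
      have hn0 : (n : ℂ) ≠ 0 := by norm_cast; omega
      nth_rewrite 2 [← norm_mul_exp_arg_mul_I a]
      rw [← Complex.exp_nat_mul, mul_left_comm, ← Complex.exp_add]
      congr 2
      push_cast
      field_simp
      ring
    rw [hprod, re_ofReal_mul, exp_ofReal_mul_I_re, Real.cos_sub_pi]
    have : 0 < Real.cos (arg a / 4) := cos_pos_of_mem_Ioo ⟨by linarith, by linarith⟩
    nlinarith [norm_pos_iff.mpr ha]

theorem tendsto_ray_nhdsWithin_im_lt (z₀ : ℂ) {θ : ℝ} (hθ : Real.sin θ < 0) :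
    Tendsto (fun r : ℝ => z₀ + r * exp (θ * I)) (𝓝[>] 0) (𝓝[{z | z.im < z₀.im}] z₀) := by
  refine tendsto_nhdsWithin_iff.mpr ⟨?_, ?_⟩
  · have : Continuous fun r : ℝ => z₀ + r * exp (θ * I) := by fun_prop
    simpa using this.continuousWithinAt.tendsto (x := 0) (s := Ioi 0)
  · filter_upwards [self_mem_nhdsWithin] with r (hr : 0 < r)
    simpa [exp_ofReal_mul_I_im] using mul_neg_of_pos_of_neg hr hθ

theorem AnalyticAt.two_le_analyticOrderAt_sub_of_deriv_eq_zero {F : ℂ → ℂ} {z₀ : ℂ}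
    (hF : AnalyticAt ℂ F z₀) (hF' : deriv F z₀ = 0) :
    2 ≤ analyticOrderAt (fun z => F z - F z₀) z₀ := by
  refine (natCast_le_analyticOrderAt_iff_iteratedDeriv_eq_zero (by fun_prop)).mpr fun i hi => ?_
  interval_cases i
  · simp
  · simpa [iteratedDeriv_one] using hF'

theorem AnalyticAt.eventuallyEq_of_deriv_eq_zero_of_re_le {F : ℂ → ℂ} {z₀ : ℂ}
    (hF : AnalyticAt ℂ F z₀) (hF' : deriv F z₀ = 0)
    (hmin : ∀ᶠ z in 𝓝[{z | z.im < z₀.im}] z₀, (F z₀).re ≤ (F z).re) :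
    F =ᶠ[𝓝 z₀] fun _ => F z₀ := by
  have hf : AnalyticAt ℂ (fun z => F z - F z₀) z₀ := hF.sub analyticAt_const
  by_contra hne
  have hfin : analyticOrderAt (fun z => F z - F z₀) z₀ ≠ ⊤ := by
    rw [Ne, analyticOrderAt_eq_top]
    exact fun h => hne (h.mono fun z hz => sub_eq_zero.mp hz)
  obtain ⟨n, hn⟩ := ENat.ne_top_iff_exists.mp hfin
  have hn2 : 2 ≤ n := by
    exact_mod_cast hn ▸ hF.two_le_analyticOrderAt_sub_of_deriv_eq_zero hF'
  obtain ⟨G, hG, hGz₀, hfG⟩ := hf.analyticOrderAt_eq_natCast.mp hn.symm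
  obtain ⟨θ, ⟨hθ₁, hθ₂⟩, hneg⟩ := exists_neg_re_exp_pow_mul hn2 hGz₀
  have hray := tendsto_ray_nhdsWithin_im_lt z₀ (Real.sin_neg_of_neg_of_neg_pi_lt hθ₂ hθ₁)
  have hray' := hray.mono_right nhdsWithin_le_nhds
  have hGray : ∀ᶠ r : ℝ in 𝓝[>] 0, (exp (θ * I) ^ n * G (z₀ + r * exp (θ * I))).re < 0 := by
    have hlim : Tendsto (fun r : ℝ => (exp (θ * I) ^ n * G (z₀ + r * exp (θ * I))).re) (𝓝[>] 0)
        (𝓝 (exp (θ * I) ^ n * G z₀).re) :=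
      (continuous_re.tendsto _).comp ((hG.continuousAt.tendsto.comp hray').const_mul _)
    exact hlim.eventually (gt_mem_nhds hneg)
  obtain ⟨r, ⟨hr, hle⟩, hfr, hGr⟩ :=
    ((eventually_mem_nhdsWithin.and (hray.eventually hmin)).and
      ((hray'.eventually hfG).and hGray)).exists
  have hr : 0 < r := hr
  simp only [add_sub_cancel_left, smul_eq_mul, mul_pow, ← ofReal_pow, mul_assoc] at hfr
  have : (F (z₀ + r * exp (θ * I))).re - (F z₀).re < 0 := by
    rw [← sub_re, hfr, re_ofReal_mul]
    exact mul_neg_of_pos_of_neg (pow_pos hr n) hGr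
  linarith

theorem deriv_eq_zero_of_fderiv_re_eq_zero {F : ℂ → ℂ} {w : ℂ} (hF : DifferentiableAt ℂ F w)
    (h : fderiv ℝ (fun z => (F z).re) w = 0) : deriv F w = 0 := by
  have hre : HasFDerivAt (fun z => (F z).re)
      (reCLM.comp (((1 : ℂ →L[ℂ] ℂ).smulRight (deriv F w)).restrictScalars ℝ)) w :=
    reCLM.hasFDerivAt.comp w (hF.hasDerivAt.hasFDerivAt.restrictScalars ℝ)
  rw [hre.fderiv] at h
  have h1 := congrArg (fun L => L 1) h
  have hI := congrArg (fun L => L I) h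
  simp only [ContinuousLinearMap.comp_apply, ContinuousLinearMap.coe_restrictScalars',
    ContinuousLinearMap.smulRight_apply, one_apply_eq_self, smul_eq_mul, one_mul, reCLM_apply,
    zero_apply, mul_re, I_re, zero_mul, I_im, zero_sub, neg_eq_zero] at h1 hI
  exact Complex.ext h1 hI

theorem InnerProductSpace.HarmonicOnNhd.eqOn_of_fderiv_eq_zero_of_le {u : ℂ → ℝ} {c z₀ : ℂ}
    {R : ℝ} (hu : HarmonicOnNhd u (ball c R)) (hz₀ : z₀ ∈ ball c R) (hgrad : fderiv ℝ u z₀ = 0)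
    (hmin : ∀ z ∈ ball c R, z.im < z₀.im → u z₀ ≤ u z) :
    EqOn u (fun _ => u z₀) (ball c R) := by
  obtain ⟨F, hF, hFu⟩ := hu.exists_analyticOnNhd_ball_re_eq
  replace hFu : ∀ z ∈ ball c R, u z = (F z).re := fun z hz => (hFu hz).symm
  have hball : ∀ᶠ z in 𝓝 z₀, z ∈ ball c R := isOpen_ball.mem_nhds hz₀
  have hF' : deriv F z₀ = 0 := by
    refine deriv_eq_zero_of_fderiv_re_eq_zero (hF z₀ hz₀).differentiableAt ?_
    have huF : u =ᶠ[𝓝 z₀] fun z => (F z).re := hball.mono hFu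
    rwa [← huF.fderiv_eq]
  have hFmin : ∀ᶠ z in 𝓝[{z | z.im < z₀.im}] z₀, (F z₀).re ≤ (F z).re := by
    filter_upwards [self_mem_nhdsWithin, nhdsWithin_le_nhds hball] with z hz hzball
    rw [← hFu z₀ hz₀, ← hFu z hzball]
    exact hmin z hzball hz
  have hFconst : EqOn F (fun _ => F z₀) (ball c R) :=
    hF.eqOn_of_preconnected_of_eventuallyEq analyticOnNhd_const (convex_ball c R).isPreconnected
      hz₀ ((hF z₀ hz₀).eventuallyEq_of_deriv_eq_zero_of_re_le hF' hFmin)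
  intro z hz
  rw [hFu z hz, hFu z₀ hz₀, hFconst hz]

theorem Complex.mem_ball_zero_one_iff {w : ℂ} : w ∈ ball (0 : ℂ) 1 ↔ w.re ^ 2 + w.im ^ 2 < 1 := by
  rw [mem_ball_zero_iff, ← sq_lt_one_iff₀ (norm_nonneg w), Complex.sq_norm, normSq_apply]
  ring_nf

/-- Branch-point exclusion: let `h` be harmonic on the open unit disk `D`, odd under
the reflection `(x,y) ↦ (x,−y)` (so `h = 0` on the real diameter) and nonnegative on
the lower half-disk. If the gradient of `h` vanishes at some point of the real
diameter, then `h` is identically zero on `D`. -/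
theorem harmonic_odd_nonneg_gradient_vanishes
    (h : ℝ × ℝ → ℝ)
    (D : Set (ℝ × ℝ)) (hD : D = {z : ℝ × ℝ | z.1 ^ 2 + z.2 ^ 2 < 1})
    (hC2 : ContDiffOn ℝ 2 h D)
    (hharm : ∀ z ∈ D, pd1 (pd1 h) z + pd2 (pd2 h) z = 0)
    (hodd : ∀ z ∈ D, h (z.1, -z.2) = -h z)
    (hnonneg : ∀ z ∈ D, z.2 < 0 → 0 ≤ h z)
    (z₀ : ℝ × ℝ) (hz₀ : z₀ ∈ D) (hz₀real : z₀.2 = 0)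
    (hgrad : pd1 h z₀ = 0 ∧ pd2 h z₀ = 0) :
    ∀ z ∈ D, h z = 0 := by
  have hDball : equivRealProd ⁻¹' D = ball (0 : ℂ) 1 := by
    ext w
    rw [Set.mem_preimage, Complex.mem_ball_zero_one_iff, hD]
    rfl
  have hDopen : IsOpen D := hD ▸ isOpen_lt (by fun_prop) continuous_const
  have hu : HarmonicOnNhd (fun w : ℂ => h (w.re, w.im)) (ball 0 1) :=
    hDball ▸ harmonicOnNhd_of_pd1_pd1_add_pd2_pd2_eq_zero hDopen hC2 hharm
  have hw₀ : (⟨z₀.1, z₀.2⟩ : ℂ) ∈ ball 0 1 := hDball.le hz₀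
  have hgrad' := (fderiv_eq_zero_iff_pd1_eq_zero_and_pd2_eq_zero
    ((hu _ hw₀).1.differentiableAt two_ne_zero)).mpr hgrad
  have hhz₀ : h z₀ = 0 := by
    have := hodd z₀ hz₀
    rw [hz₀real, neg_zero, ← hz₀real] at this
    linarith
  have hconst := hu.eqOn_of_fderiv_eq_zero_of_le hw₀ hgrad'
    fun w hw hw₀ => hhz₀ ▸ hnonneg _ (hDball.ge hw) (hz₀real ▸ hw₀)
  intro z hz
  have hzball : (⟨z.1, z.2⟩ : ℂ) ∈ ball 0 1 := hDball.le hz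
  exact (hconst hzball).trans hhz₀
end
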